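/- arXiv:2003.14063 — 7 statements merged into one kernel-verified Lean document; each statement's English description precedes it below -/
import Mathlib

section
/- Let C be a linear [n,k] code over F_q with parity-check matrix H (an (n-k)×n matrix), and let A_s denote the number of codewords of C of Hamming weight s. For any integer ν with 1 ≤ ν ≤ n, the sum over s from 0 to ν of binom(n-s, ν-s)·A_s equals the sum over r from 0 to ν of N_H(ν,r)·q^(ν-r), where N_H(ν,r) is the number of (n-k)×ν submatrices of H (choices of ν columns of H) having rank r. -/
/-! Double count the pairs `(x, I)` of a codeword `x` and a `ν`-set `I` of coordinates containing
the support of `x`. A codeword of weight `s` lies in `C(n-s, ν-s)` such sets. The codewords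
supported in `I` are, after restriction to `I`, the kernel of the column submatrix `H_[I]`, which
has `q ^ (ν - rank H_[I])` elements by rank–nullity. -/

open Finset Matrix

theorem sum_card_filter_eq_smul {α β M : Type*} [DecidableEq β] [AddCommMonoid M]
    (s : Finset α) (t : Finset β) (g : α → β) (f : β → M) :
    ∑ b ∈ t, #{a ∈ s | g a = b} • f b = ∑ a ∈ s with g a ∈ t, f (g a) := by
  rw [← sum_fiberwise_eq_sum_filter]
  refine sum_congr rfl fun b _ => ?_
  rw [← sum_const]
  exact sum_congr rfl fun a ha => by rw [(mem_filter.mp ha).2]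

theorem card_filter_powersetCard_univ_superset {α : Type*} [Fintype α] [DecidableEq α]
    (s : Finset α) (ν : ℕ) :
    #{I ∈ powersetCard ν univ | s ⊆ I}
      = if #s ≤ ν then (Fintype.card α - #s).choose (ν - #s) else 0 := by
  split_ifs with hsν
  · rw [card_filter_powersetCard_subset s univ ν (subset_univ s) hsν, card_univ]
  · refine card_eq_zero.mpr (filter_eq_empty_iff.mpr fun I hI hsI => hsν ?_)
    exact (card_le_card hsI).trans (mem_powersetCard_univ.mp hI).le

section Support

variable {ι K : Type*} [Fintype ι] [Zero K] [DecidableEq K]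

def supportFinset (x : ι → K) : Finset ι := {j | x j ≠ 0}

theorem hammingNorm_eq_card_supportFinset (x : ι → K) : hammingNorm x = #(supportFinset x) :=
  rfl

theorem supportFinset_subset_iff {x : ι → K} {I : Finset ι} :
    supportFinset x ⊆ I ↔ ∀ j ∉ I, x j = 0 := by
  simp only [supportFinset, subset_iff, mem_filter, mem_univ, true_and]
  exact ⟨fun h j hj => by_contra fun hx => hj (h hx), fun h j hx => by_contra fun hj => hx (h j hj)⟩

theorem sum_choose_mul_card_filter_hammingNorm [DecidableEq ι] (C : Finset (ι → K)) (ν : ℕ) :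
    ∑ s ∈ range (ν + 1), (Fintype.card ι - s).choose (ν - s) * #{x ∈ C | hammingNorm x = s}
      = ∑ x ∈ C, #{I ∈ powersetCard ν univ | supportFinset x ⊆ I} := by
  simp_rw [mul_comm _ #(filter _ _), ← smul_eq_mul, sum_card_filter_eq_smul, sum_filter,
    mem_range_succ_iff, card_filter_powersetCard_univ_superset,
    ← hammingNorm_eq_card_supportFinset]
  -- the two sides differ only in their `Decidable` and `0` instances
  rfl

end Support

theorem mulVec_eq_submatrix_mulVec_of_forall_notMem_eq_zero {R m ι : Type*}
    [NonUnitalNonAssocSemiring R] [Fintype ι] (H : Matrix m ι R) {I : Finset ι} {x : ι → R}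
    (hx : ∀ j ∉ I, x j = 0) :
    H *ᵥ x = H.submatrix id ((↑) : I → ι) *ᵥ fun j => x j := by
  funext i
  simp only [mulVec, dotProduct, submatrix_apply, id_eq]
  rw [sum_coe_sort I fun j => H i j * x j]
  exact (sum_subset (subset_univ I) fun j _ hj => by rw [hx j hj, mul_zero]).symm

section Kernel

variable {K m ι : Type*} [Field K] [Fintype K] [DecidableEq K] [Fintype m] [Fintype ι]
  [DecidableEq ι]

theorem card_filter_mulVec_eq_zero (A : Matrix m ι K) :
    #{y | A *ᵥ y = 0} = Fintype.card K ^ (Fintype.card ι - A.rank) := by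
  classical
  have hker : #{y | A *ᵥ y = 0} = Fintype.card (LinearMap.ker A.mulVecLin) := by
    rw [Fintype.card_subtype]; simp [LinearMap.mem_ker]
  have hnullity := LinearMap.finrank_range_add_finrank_ker A.mulVecLin
  rw [Module.finrank_fintype_fun_eq_card] at hnullity
  rw [hker, Module.card_eq_pow_finrank (K := K), Matrix.rank, ← hnullity, Nat.add_sub_cancel_left]

theorem card_filter_mulVec_eq_zero_of_supportFinset_subset (H : Matrix m ι K) (I : Finset ι) :
    #{x | H *ᵥ x = 0 ∧ supportFinset x ⊆ I}
      = Fintype.card K ^ (#I - (H.submatrix id ((↑) : I → ι)).rank) := by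
  rw [← Fintype.card_coe I, ← card_filter_mulVec_eq_zero]
  have hext (y : I → K) : ∀ j ∉ I, Function.extend ((↑) : I → ι) y 0 j = 0 := fun j hj =>
    Function.extend_apply' _ _ _ (by rintro ⟨i, rfl⟩; exact hj i.2)
  have hres (y : I → K) : (fun i : I => Function.extend ((↑) : I → ι) y 0 (i : ι)) = y :=
    funext (Subtype.val_injective.extend_apply y 0)
  refine card_nbij' (fun x j => x j) (fun y => Function.extend ((↑) : I → ι) y 0) ?_ ?_ ?_ ?_
  · intro x hx
    simp only [mem_coe, mem_filter, mem_univ, true_and, supportFinset_subset_iff] at hx ⊢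
    rw [← mulVec_eq_submatrix_mulVec_of_forall_notMem_eq_zero H hx.2, hx.1]
  · intro y hy
    simp only [mem_coe, mem_filter, mem_univ, true_and, supportFinset_subset_iff] at hy ⊢
    refine ⟨?_, hext y⟩
    rw [mulVec_eq_submatrix_mulVec_of_forall_notMem_eq_zero H (hext y), hres, hy]
  · intro x hx
    simp only [mem_coe, mem_filter, mem_univ, true_and, supportFinset_subset_iff] at hx
    funext j
    by_cases hj : j ∈ I
    · exact Subtype.val_injective.extend_apply (fun i : I => x i) 0 ⟨j, hj⟩
    · exact (hext _ j hj).trans (hx.2 j hj).symm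
  · intro y _
    exact hres y

end Kernel

theorem weight_distribution_submatrix_count_general
    (q n k : ℕ) (F : Type*) [Field F] [Fintype F] [DecidableEq F]
    (hq : Fintype.card F = q)
    (H : Matrix (Fin (n - k)) (Fin n) F)
    (A : ℕ → ℕ)
    (hA : ∀ s, A s = Nat.card {x : Fin n → F // H.mulVec x = 0 ∧ hammingNorm x = s})
    (N : ℕ → ℕ → ℕ)
    (hN : ∀ ν r, N ν r = ((univ.powersetCard ν : Finset (Finset (Fin n))).filter
      (fun I => (H.submatrix id (fun j : {j // j ∈ I} => j.1)).rank = r)).card)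
    (ν : ℕ) :
    ∑ s ∈ range (ν + 1), (n - s).choose (ν - s) * A s
      = ∑ r ∈ range (ν + 1), N ν r * q ^ (ν - r) := by
  subst hq
  set C : Finset (Fin n → F) := {x | H *ᵥ x = 0}
  set P : Finset (Finset (Fin n)) := powersetCard ν univ
  have hrank_le : ∀ I ∈ P, (H.submatrix id ((↑) : I → Fin n)).rank ∈ range (ν + 1) :=
    fun I hI => mem_range_succ_iff.mpr <|
      (rank_le_card_width _).trans_eq <| (Fintype.card_coe I).trans (mem_powersetCard_univ.mp hI)
  calc ∑ s ∈ range (ν + 1), (n - s).choose (ν - s) * A s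
      = ∑ x ∈ C, #{I ∈ P | supportFinset x ⊆ I} := by
        simp_rw [hA, Nat.card_eq_fintype_card, Fintype.card_subtype, ← filter_filter]
        simpa only [Fintype.card_fin] using sum_choose_mul_card_filter_hammingNorm C ν
    _ = ∑ I ∈ P, #{x ∈ C | supportFinset x ⊆ I} :=
        sum_card_bipartiteAbove_eq_sum_card_bipartiteBelow _
    _ = ∑ I ∈ P, Fintype.card F ^ (ν - (H.submatrix id ((↑) : I → Fin n)).rank) :=
        sum_congr rfl fun I hI => by
          rw [filter_filter, card_filter_mulVec_eq_zero_of_supportFinset_subset,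
            mem_powersetCard_univ.mp hI]
    _ = ∑ r ∈ range (ν + 1), N ν r * Fintype.card F ^ (ν - r) := by
        simp_rw [hN, ← smul_eq_mul, sum_card_filter_eq_smul]
        rw [filter_true_of_mem hrank_le]

/-- **Proposition (number of matrices).** For a linear `[n,k]` code over `F_q` with
parity-check matrix `H`, weight distribution `A` and `N ν r` the number of
`(n-k) × ν` column-submatrices of `H` of rank `r`, for every `1 ≤ ν ≤ n`:
`∑_{s=0}^{ν} C(n-s, ν-s) A_s = ∑_{r=0}^{ν} N_H(ν,r) q^{ν-r}`. -/
theorem weight_distribution_submatrix_count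
    (q n k : ℕ) (F : Type*) [Field F] [Fintype F] [DecidableEq F]
    (hq : Fintype.card F = q) (hkn : k ≤ n)
    (H : Matrix (Fin (n - k)) (Fin n) F)
    (hrank : H.rank = n - k)
    (A : ℕ → ℕ)
    (hA : ∀ s, A s = Nat.card {x : Fin n → F // H.mulVec x = 0 ∧ hammingNorm x = s})
    (N : ℕ → ℕ → ℕ)
    (hN : ∀ ν r, N ν r = ((univ.powersetCard ν : Finset (Finset (Fin n))).filter
      (fun I => (H.submatrix id (fun j : {j // j ∈ I} => j.1)).rank = r)).card)
    (ν : ℕ) (hν1 : 1 ≤ ν) (hνn : ν ≤ n) :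
    ∑ s ∈ range (ν + 1), (n - s).choose (ν - s) * A s
      = ∑ r ∈ range (ν + 1), N ν r * q ^ (ν - r) :=
  weight_distribution_submatrix_count_general q n k F hq H A hA N hN ν
end

section
/- Let C be a linear [n,k] code over F_q with weight distribution (A_0,...,A_n) and let d⊥ be the minimum distance of the dual code. For every integer ν with n - d⊥ < ν ≤ n, the sum over s from 0 to ν of binom(n-s, ν-s)·A_s equals binom(n,ν)·q^(ν+k-n). -/
/-!
If `#Tᶜ < d⊥`, restricting `C` to the coordinates outside `T` is onto `F^{Tᶜ}`: otherwise a
nonzero functional vanishing on the image yields a nonzero dual codeword supported in `Tᶜ`,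
of weight `< d⊥`. Hence the codewords vanishing outside a `ν`-set `T` form the kernel of a
surjection onto `F^{n-ν}` and number `q^{k+ν-n}`. Counting the pairs `(x, T)` with `x ∈ C`,
`#T = ν` and `supp x ⊆ T` in two ways gives the identity, since a word of weight `s ≤ ν` lies in
`C(n-s, ν-s)` such sets `T`.
-/

open Finset Matrix

theorem sum_card_filter_subset_powersetCard {α ι : Type*} [Fintype ι] [DecidableEq ι]
    (X : Finset α) (g : α → Finset ι) (ν : ℕ) :
    ∑ T ∈ powersetCard ν univ, #{x ∈ X | g x ⊆ T}
      = ∑ s ∈ range (ν + 1), (Fintype.card ι - s).choose (ν - s) * #{x ∈ X | #(g x) = s} := by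
  calc ∑ T ∈ powersetCard ν univ, #{x ∈ X | g x ⊆ T}
      = ∑ x ∈ X, #{T ∈ powersetCard ν univ | g x ⊆ T} :=
        (sum_card_bipartiteAbove_eq_sum_card_bipartiteBelow _).symm
    _ = ∑ x ∈ X with #(g x) ∈ range (ν + 1), (Fintype.card ι - #(g x)).choose (ν - #(g x)) := by
        rw [sum_filter]
        refine sum_congr rfl fun x _ => ?_
        split_ifs with hx
        · rw [← card_univ]
          exact card_filter_powersetCard_subset _ _ _ (subset_univ _)
            (by simpa [Nat.lt_succ_iff] using hx)
        · refine card_eq_zero.2 (filter_eq_empty_iff.2 fun T hT hsub => hx ?_)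
          simpa [Nat.lt_succ_iff, (mem_powersetCard.1 hT).2] using card_le_card hsub
    _ = ∑ s ∈ range (ν + 1), ∑ x ∈ X with #(g x) = s, (Fintype.card ι - s).choose (ν - s) :=
        (sum_fiberwise_eq_sum_filter' X _ (fun x => #(g x)) fun s =>
          (Fintype.card ι - s).choose (ν - s)).symm
    _ = _ := by simp only [sum_const, smul_eq_mul, mul_comm]

theorem sum_card_filter_vanishing_powersetCard {ι β : Type*} [Fintype ι] [DecidableEq ι]
    [Zero β] [DecidableEq β] (X : Finset (ι → β)) (ν : ℕ) :
    ∑ T ∈ powersetCard ν univ, #{x ∈ X | ∀ i ∉ T, x i = 0}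
      = ∑ s ∈ range (ν + 1),
          (Fintype.card ι - s).choose (ν - s) * #{x ∈ X | hammingNorm x = s} := by
  refine (sum_congr rfl fun T _ => ?_).trans
    (sum_card_filter_subset_powersetCard X (fun x => {i | x i ≠ 0}) ν)
  refine congrArg card (filter_congr fun x _ => ?_)
  simp only [subset_iff, mem_filter, mem_univ, true_and]
  exact forall_congr' fun i => not_imp_comm

section

variable {ι F : Type*} [Fintype ι] [Field F]

theorem exists_orthogonal_supported_of_not_surjective {C : Submodule F (ι → F)} {S : Finset ι}
    (h : ¬ Function.Surjective ((LinearMap.funLeft F F ((↑) : S → ι)).domRestrict C)) :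
    ∃ y : ι → F, y ≠ 0 ∧ (∀ x ∈ C, x ⬝ᵥ y = 0) ∧ ∀ i ∉ S, y i = 0 := by
  classical
  set ρ := LinearMap.funLeft F F ((↑) : S → ι)
  obtain ⟨f, hf0, hf⟩ := (LinearMap.range (ρ.domRestrict C)).exists_le_ker_of_lt_top
    (lt_top_iff_ne_top.2 (mt LinearMap.range_eq_top.1 h))
  have hρ : Function.Surjective ρ :=
    LinearMap.funLeft_surjective_of_injective _ _ _ Subtype.val_injective
  refine ⟨(dotProductEquiv F ι).symm (f ∘ₗ ρ), ?_, fun x hx => ?_, fun i hi => ?_⟩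
  · rw [Ne, LinearEquiv.symm_apply_eq, map_zero]
    exact fun h0 => hf0 (LinearMap.ext fun v => by
      obtain ⟨w, rfl⟩ := hρ v
      exact LinearMap.congr_fun h0 w)
  · rw [dotProduct_comm, ← dotProductEquiv_apply_apply, LinearEquiv.apply_symm_apply]
    exact hf ⟨⟨x, hx⟩, rfl⟩
  · have : ρ (Pi.single i 1) = 0 := by
      ext ⟨j, hj⟩
      simp [ρ, LinearMap.funLeft_apply, show j ≠ i from fun e => hi (e ▸ hj)]
    simp [this]

theorem funLeft_domRestrict_surjective_of_card_lt [DecidableEq F]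
    {C : Submodule F (ι → F)} {d : ℕ}
    (hd : ∀ y : ι → F, (∀ x ∈ C, x ⬝ᵥ y = 0) → y ≠ 0 → d ≤ hammingNorm y)
    {S : Finset ι} (hS : #S < d) :
    Function.Surjective ((LinearMap.funLeft F F ((↑) : S → ι)).domRestrict C) := by
  by_contra h
  obtain ⟨y, hy0, hyC, hyS⟩ := exists_orthogonal_supported_of_not_surjective h
  have : hammingNorm y ≤ #S :=
    card_le_card fun i hi => by_contra fun hiS => (mem_filter.1 hi).2 (hyS i hiS)
  exact absurd (hd y hyC hy0) (by omega)

theorem natCard_vanishing_mul_pow [Fintype F] {C : Submodule F (ι → F)} {S : Finset ι}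
    (h : Function.Surjective ((LinearMap.funLeft F F ((↑) : S → ι)).domRestrict C)) :
    Nat.card {x : ι → F // x ∈ C ∧ ∀ i ∈ S, x i = 0} * Fintype.card F ^ #S
      = Fintype.card F ^ Module.finrank F C := by
  set φ := (LinearMap.funLeft F F ((↑) : S → ι)).domRestrict C
  have hker : Nat.card {x : ι → F // x ∈ C ∧ ∀ i ∈ S, x i = 0}
      = Fintype.card F ^ Module.finrank F (LinearMap.ker φ) := by
    have hmem : ∀ x : C, x ∈ LinearMap.ker φ ↔ ∀ i ∈ S, (x : ι → F) i = 0 := fun x => by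
      simp [φ, funext_iff, LinearMap.funLeft_apply]
    rw [← Nat.card_eq_fintype_card, ← Module.natCard_eq_pow_finrank (V := LinearMap.ker φ)]
    exact Nat.card_congr ((Equiv.subtypeEquivRight hmem).trans
      (Equiv.subtypeSubtypeEquivSubtypeInter (· ∈ C) fun x => ∀ i ∈ S, x i = 0)).symm
  have hrank := φ.finrank_range_add_finrank_ker
  rw [LinearMap.range_eq_top.2 h, finrank_top, Module.finrank_fintype_fun_eq_card,
    Fintype.card_coe] at hrank
  rw [hker, ← pow_add, ← hrank, add_comm]

theorem natCard_vanishing_outside_eq_zpow [DecidableEq ι] [Fintype F] [DecidableEq F]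
    {C : Submodule F (ι → F)} {d : ℕ}
    (hd : ∀ y : ι → F, (∀ x ∈ C, x ⬝ᵥ y = 0) → y ≠ 0 → d ≤ hammingNorm y)
    {T : Finset ι} (hT : #Tᶜ < d) :
    (Nat.card {x : ι → F // x ∈ C ∧ ∀ i ∉ T, x i = 0} : ℚ)
      = (Fintype.card F : ℚ) ^ ((#T : ℤ) + Module.finrank F C - Fintype.card ι) := by
  have hcard := natCard_vanishing_mul_pow (funLeft_domRestrict_surjective_of_card_lt hd hT)
  simp only [mem_compl, card_compl] at hcard
  have hq0 : (Fintype.card F : ℚ) ≠ 0 := by exact_mod_cast Fintype.card_ne_zero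
  have hTle := card_le_univ T
  rw [show (#T : ℤ) + Module.finrank F C - Fintype.card ι
      = (Module.finrank F C : ℤ) - (Fintype.card ι - #T : ℕ) by omega,
    zpow_sub₀ hq0, zpow_natCast, zpow_natCast, eq_div_iff (pow_ne_zero _ hq0)]
  exact_mod_cast hcard

end

theorem weight_distribution_linear_system_general
    (q n k : ℕ) (F : Type*) [Field F] [Fintype F] [DecidableEq F]
    (hq : Fintype.card F = q)
    (C : Submodule F (Fin n → F)) (hk : Module.finrank F C = k)
    (A : ℕ → ℕ)
    (hA : ∀ s, A s = Nat.card {x : Fin n → F // x ∈ C ∧ hammingNorm x = s})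
    (dperp : ℕ)
    (hdperp : IsLeast {w : ℕ | ∃ y : Fin n → F,
      (∀ x ∈ C, ∑ i, x i * y i = 0) ∧ y ≠ 0 ∧ hammingNorm y = w} dperp)
    (ν : ℕ) (hν1 : n - dperp < ν) :
    ∑ s ∈ range (ν + 1), ((n - s).choose (ν - s) : ℚ) * A s
      = (n.choose ν : ℚ) * (q : ℚ) ^ ((ν : ℤ) + k - n) := by
  classical
  set X : Finset (Fin n → F) := {x | x ∈ C}
  have hAX : ∀ s, A s = #{x ∈ X | hammingNorm x = s} := fun s => by
    rw [hA, Nat.card_eq_fintype_card, Fintype.card_subtype, filter_filter]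
  have hsub : ∀ T ∈ powersetCard ν (univ : Finset (Fin n)),
      (#{x ∈ X | ∀ i ∉ T, x i = 0} : ℚ) = (q : ℚ) ^ ((ν : ℤ) + k - n) := by
    intro T hT
    have hν : ν ≤ n := by simpa [(mem_powersetCard.1 hT).2] using card_le_univ T
    have hT' : #Tᶜ < dperp := by
      rw [card_compl, Fintype.card_fin, (mem_powersetCard.1 hT).2]
      omega
    rw [filter_filter, ← Fintype.card_subtype, ← Nat.card_eq_fintype_card,
      natCard_vanishing_outside_eq_zpow (fun y hy hy0 => hdperp.2 ⟨y, hy, hy0, rfl⟩) hT',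
      (mem_powersetCard.1 hT).2, hq, hk, Fintype.card_fin]
  calc ∑ s ∈ range (ν + 1), ((n - s).choose (ν - s) : ℚ) * A s
      = ((∑ T ∈ powersetCard ν (univ : Finset (Fin n)),
          #{x ∈ X | ∀ i ∉ T, x i = 0} : ℕ) : ℚ) := by
        -- on `Fin n` the decidability instance of `∀ i ∉ T, _` differs from the generic one
        convert congrArg ((↑) : ℕ → ℚ) (sum_card_filter_vanishing_powersetCard X ν).symm using 1
        · push_cast [hAX, Fintype.card_fin, mul_comm]
          rfl
        · congr!
    _ = (n.choose ν : ℚ) * (q : ℚ) ^ ((ν : ℤ) + k - n) := by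
        rw [Nat.cast_sum, sum_congr rfl hsub, sum_const, card_powersetCard, card_univ,
          Fintype.card_fin, nsmul_eq_mul]

/-- **Proposition (the linear system).** For a linear `[n,k]` code `C` over `F_q` with
dual distance `d⊥`, for every `n - d⊥ < ν ≤ n`:
`∑_{s=0}^{ν} C(n-s, ν-s) A_s = C(n,ν) q^{ν+k-n}`. -/
theorem weight_distribution_linear_system
    (q n k : ℕ) (F : Type*) [Field F] [Fintype F] [DecidableEq F]
    (hq : Fintype.card F = q)
    (C : Submodule F (Fin n → F)) (hk : Module.finrank F C = k)
    (A : ℕ → ℕ)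
    (hA : ∀ s, A s = Nat.card {x : Fin n → F // x ∈ C ∧ hammingNorm x = s})
    (dperp : ℕ)
    (hdperp : IsLeast {w : ℕ | ∃ y : Fin n → F,
      (∀ x ∈ C, ∑ i, x i * y i = 0) ∧ y ≠ 0 ∧ hammingNorm y = w} dperp)
    (ν : ℕ) (hν1 : n - dperp < ν) (hν2 : ν ≤ n) :
    ∑ s ∈ range (ν + 1), ((n - s).choose (ν - s) : ℚ) * A s
      = (n.choose ν : ℚ) * (q : ℚ) ^ ((ν : ℤ) + k - n) :=
  weight_distribution_linear_system_general q n k F hq C hk A hA dperp hdperp ν hν1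
end

section
/- Let C be a linear [n,k,d] code over F_q with dual distance d⊥, and let σ = (n-k+1-d) + (k+1-d⊥) be the sum of the Singleton defects of C and C⊥. Then the knowledge of any n - d⊥ + 1 values among A_0,...,A_n, together with the linear relations Σ_{s=0}^{ν} binom(n-s,ν-s)A_s = binom(n,ν)q^{ν+k-n} for n-d⊥ < ν ≤ n, determines the full weight distribution uniquely; i.e., the linear system in the remaining d⊥ unknowns has a unique solution. -/
/-!
The relations for `ν = n - i`, `i < d⊥`, rewritten by `binom(n-s, ν-s) = binom(n-s, i)`, say that
the difference `B = A - A'` of two solutions satisfies `∑ₛ binom(n-s, i) B s = 0` for `i < d⊥`.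
Since `B` vanishes on the `n - d⊥ + 1` prescribed indices, only `d⊥` unknowns remain, and their
coefficient matrix `(binom(n-s, i))` is a square minor of the Pascal matrix. Such a minor equals,
up to the factors `1 / i!`, a Vandermonde determinant in the distinct nodes `n - s`, so it is
invertible and `B = 0`.
-/

open Finset Matrix Polynomial

theorem det_choose_ne_zero {K : Type*} [Field K] [CharZero K] {r : ℕ} {x : Fin r → ℕ}
    (hx : Function.Injective x) : (of fun i j : Fin r => ((x j).choose i : K)).det ≠ 0 := by
  have hchoose : (of fun i j : Fin r => ((x j).choose i : K))ᵀ =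
      of fun j i : Fin r => ((i : ℕ).factorial : K)⁻¹ *
        of (fun j i : Fin r => (descPochhammer K i).eval (x j : K)) j i := by
    ext j i
    rw [transpose_apply, of_apply, of_apply, of_apply, descPochhammer_eval_eq_descFactorial,
      Nat.descFactorial_eq_factorial_mul_choose, Nat.cast_mul, inv_mul_cancel_left₀]
    exact_mod_cast (i : ℕ).factorial_ne_zero
  rw [← det_transpose, hchoose, det_mul_row, ← det_eval_matrixOfPolynomials_eq_det_vandermonde _ _
    (fun i => descPochhammer_natDegree K i) (fun i => monic_descPochhammer K i)]
  refine mul_ne_zero (prod_ne_zero_iff.mpr fun i _ => ?_) (det_vandermonde_ne_zero_iff.mpr ?_)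
  · exact inv_ne_zero (by exact_mod_cast (i : ℕ).factorial_ne_zero)
  · exact Nat.cast_injective.comp hx

theorem eq_zero_of_sum_choose_mul_eq_zero {K α : Type*} [Field K] [CharZero K] {T : Finset α}
    {f : α → ℕ} (hf : Set.InjOn f T) {c : α → K}
    (h : ∀ i < #T, ∑ s ∈ T, ((f s).choose i : K) * c s = 0) : ∀ s ∈ T, c s = 0 := by
  set e := T.equivFin
  have hx : Function.Injective fun j => f (e.symm j) := fun j₁ j₂ hj =>
    e.symm.injective (Subtype.ext (hf (e.symm j₁).2 (e.symm j₂).2 hj))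
  have hv := eq_zero_of_mulVec_eq_zero (det_choose_ne_zero (K := K) hx)
    (v := fun j => c (e.symm j)) <| funext fun i => by
      rw [mulVec, dotProduct, Pi.zero_apply, ← h i i.isLt, ← sum_coe_sort T, ← e.symm.sum_comp]
      rfl
  intro s hs
  simpa using congrFun hv (e ⟨s, hs⟩)

theorem eq_zero_of_sum_choose_sub_mul_eq_zero {K : Type*} [Field K] [CharZero K] {n m : ℕ}
    {S : Finset ℕ} (hS : S ⊆ range (n + 1)) (hScard : #S = m + 1) {B : ℕ → K}
    (hBS : ∀ s ∈ S, B s = 0)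
    (hB : ∀ i < n - m, ∑ s ∈ range (n + 1), ((n - s).choose i : K) * B s = 0) :
    ∀ s ≤ n, B s = 0 := by
  have hTcard : #(range (n + 1) \ S) = n - m := by
    rw [card_sdiff_of_subset hS, card_range, hScard, Nat.add_sub_add_right]
  have hinj : Set.InjOn (n - ·) (range (n + 1) \ S : Finset ℕ) := fun a ha b hb hab => by
    simp only [coe_sdiff, coe_range, Set.mem_sdiff, Set.mem_Iio] at ha hb hab
    omega
  have hT := eq_zero_of_sum_choose_mul_eq_zero hinj fun i hi => by
    rw [← hB i (hTcard ▸ hi)]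
    refine sum_subset sdiff_subset fun s _ hs => ?_
    rw [hBS s (by simp_all), mul_zero]
  intro s hs
  by_cases hsS : s ∈ S
  · exact hBS s hsS
  · exact hT s (mem_sdiff.mpr ⟨mem_range.mpr (Nat.lt_succ_of_le hs), hsS⟩)

theorem sum_range_choose_sub_mul_eq_sum_choose_mul {R : Type*} [Semiring R] {n ν : ℕ}
    (hν : ν ≤ n) (f : ℕ → R) :
    ∑ s ∈ range (ν + 1), ((n - s).choose (ν - s) : R) * f s
      = ∑ s ∈ range (n + 1), ((n - s).choose (n - ν) : R) * f s := by
  refine (sum_congr rfl fun s hs => ?_).trans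
    (sum_subset (range_subset_range.mpr (Nat.succ_le_succ hν)) fun s hsn hs => ?_)
  · rw [mem_range] at hs
    rw [Nat.choose_symm_of_eq_add (b := n - ν) (by omega)]
  · rw [mem_range] at hsn
    rw [mem_range, not_lt] at hs
    rw [Nat.choose_eq_zero_of_lt (by omega), Nat.cast_zero, zero_mul]

theorem weight_distribution_determined_general
    (q n k dperp : ℕ)
    (A A' : ℕ → ℚ)
    (hA : ∀ ν, n - dperp < ν → ν ≤ n →
      ∑ s ∈ range (ν + 1), ((n - s).choose (ν - s) : ℚ) * A s
        = (n.choose ν : ℚ) * (q : ℚ) ^ ((ν : ℤ) + k - n))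
    (hA' : ∀ ν, n - dperp < ν → ν ≤ n →
      ∑ s ∈ range (ν + 1), ((n - s).choose (ν - s) : ℚ) * A' s
        = (n.choose ν : ℚ) * (q : ℚ) ^ ((ν : ℤ) + k - n))
    (S : Finset ℕ) (hS : S ⊆ range (n + 1)) (hScard : S.card = n - dperp + 1)
    (hagree : ∀ s ∈ S, A s = A' s) :
    ∀ s ≤ n, A s = A' s := by
  intro s hs
  refine sub_eq_zero.mp (eq_zero_of_sum_choose_sub_mul_eq_zero (B := A - A') hS hScard
    (fun s hs => sub_eq_zero.mpr (hagree s hs)) (fun i hi => ?_) s hs)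
  obtain ⟨ν, rfl, hν⟩ : ∃ ν, i = n - ν ∧ ν ≤ n := ⟨n - i, by omega, Nat.sub_le n i⟩
  rw [← sum_range_choose_sub_mul_eq_sum_choose_mul hν]
  simp only [Pi.sub_apply, mul_sub, sum_sub_distrib]
  rw [hA ν (by omega) hν, hA' ν (by omega) hν, sub_self]

/-- **Proposition.** Let `C` be a linear `[n,k,d]` code over `F_q` with dual distance
`d⊥` (so `σ + d - 1 = n - d⊥ + 1`, where `σ` is the sum of the Singleton defects).
Any `n - d⊥ + 1` values of the weight distribution, together with the linear relations
`∑_{s=0}^{ν} C(n-s,ν-s) A_s = C(n,ν) q^{ν+k-n}` for `n - d⊥ < ν ≤ n`, determine the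
full weight distribution uniquely. -/
theorem weight_distribution_determined
    (q n k d dperp : ℕ) (F : Type*) [Field F] [Fintype F] [DecidableEq F]
    (hq : Fintype.card F = q)
    (C : Submodule F (Fin n → F)) (hk : Module.finrank F C = k)
    (hd : IsLeast {w : ℕ | ∃ x : Fin n → F,
      x ∈ C ∧ x ≠ 0 ∧ hammingNorm x = w} d)
    (hdperp : IsLeast {w : ℕ | ∃ y : Fin n → F,
      (∀ x ∈ C, ∑ i, x i * y i = 0) ∧ y ≠ 0 ∧ hammingNorm y = w} dperp)
    (A A' : ℕ → ℚ)
    (hA : ∀ ν, n - dperp < ν → ν ≤ n →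
      ∑ s ∈ range (ν + 1), ((n - s).choose (ν - s) : ℚ) * A s
        = (n.choose ν : ℚ) * (q : ℚ) ^ ((ν : ℤ) + k - n))
    (hA' : ∀ ν, n - dperp < ν → ν ≤ n →
      ∑ s ∈ range (ν + 1), ((n - s).choose (ν - s) : ℚ) * A' s
        = (n.choose ν : ℚ) * (q : ℚ) ^ ((ν : ℤ) + k - n))
    (S : Finset ℕ) (hS : S ⊆ range (n + 1)) (hScard : S.card = n - dperp + 1)
    (hagree : ∀ s ∈ S, A s = A' s) :
    ∀ s ≤ n, A s = A' s :=
  weight_distribution_determined_general q n k dperp A A' hA hA' S hS hScard hagree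
end

section
/- Every r×r minor of the truncated Pascal matrix P_{r,t} = [binom(t-j, i)] with rows indexed by i = 0,...,r-1 and columns by j = 0,...,t (where binom(t-j,i) is taken to be 0 when i+j > t, and t+1 ≥ r ≥ 1) is nonzero. -/
open Matrix

/-!
Multiplying column `i` of `[C(n_j, i)]ᵀ` by `i!` turns `C(n_j, i)` into the falling factorial
`n_j (n_j - 1) ⋯ (n_j - i + 1)`, a monic polynomial of degree `i` in `n_j`. Column operations
reduce this matrix to the Vandermonde matrix of the `n_j`, so the minor is the Vandermonde
determinant divided by `∏ i!`, which is nonzero because the `n_j = t - c_j` are distinct.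
-/

namespace Matrix

variable {R : Type*} [CommRing R] {r : ℕ}

theorem det_of_choose_mul_prod_factorial (n : Fin r → ℕ) :
    (of fun i j : Fin r => ((n j).choose i : R)).det * ∏ i : Fin r, ((i : ℕ).factorial : R) =
      (of fun i j : Fin r => ((n i).descFactorial j : R)).det := by
  have h : (of fun i j : Fin r => ((n j).choose i : R))ᵀ *
      diagonal (fun i : Fin r => ((i : ℕ).factorial : R)) =
        of fun i j : Fin r => ((n i).descFactorial j : R) := by
    ext i j
    simp [Nat.descFactorial_eq_factorial_mul_choose, mul_comm]
  rw [← h, det_mul, det_transpose, det_diagonal]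

theorem det_of_descFactorial_eq_det_vandermonde [IsDomain R] (n : Fin r → ℕ) :
    (of fun i j : Fin r => ((n i).descFactorial j : R)).det =
      (vandermonde fun i => (n i : R)).det := by
  rw [det_eval_matrixOfPolynomials_eq_det_vandermonde _ (fun j : Fin r => descPochhammer R j)
    (fun j => descPochhammer_natDegree R j) (fun j => monic_descPochhammer R j)]
  simp only [descPochhammer_eval_eq_descFactorial]

theorem det_of_choose_ne_zero [IsDomain R] [CharZero R] {n : Fin r → ℕ}
    (hn : Function.Injective n) : (of fun i j : Fin r => ((n j).choose i : R)).det ≠ 0 := by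
  have hvdm : (vandermonde fun i => (n i : R)).det ≠ 0 :=
    det_vandermonde_ne_zero_iff.mpr (Nat.cast_injective.comp hn)
  rw [← det_of_descFactorial_eq_det_vandermonde, ← det_of_choose_mul_prod_factorial] at hvdm
  exact left_ne_zero_of_mul hvdm

end Matrix

theorem truncated_pascal_minors_ne_zero_general
    (r t : ℕ)
    (c : Fin r → Fin (t + 1)) (hc : StrictMono c) :
    (Matrix.of fun i j : Fin r => ((t - (c j : ℕ)).choose (i : ℕ) : ℚ)).det ≠ 0 := by
  refine det_of_choose_ne_zero fun a b hab => hc.injective (Fin.ext ?_)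
  have := (c a).is_lt
  have := (c b).is_lt
  omega

/-- Every `r × r` minor of the truncated Pascal matrix
`P_{r,t} = [C(t-j, i)]_{i=0..r-1, j=0..t}` (with `t + 1 ≥ r ≥ 1`) is nonzero. -/
theorem truncated_pascal_minors_ne_zero
    (r t : ℕ) (hr : 1 ≤ r) (hrt : r ≤ t + 1)
    (c : Fin r → Fin (t + 1)) (hc : StrictMono c) :
    (Matrix.of fun i j : Fin r => ((t - (c j : ℕ)).choose (i : ℕ) : ℚ)).det ≠ 0 :=
  truncated_pascal_minors_ne_zero_general r t c hc
end

section
/- Let C be an MDS code, i.e., a linear [n,k,d] code over F_q with d = n-k+1. Then for each w with d ≤ w ≤ n, the number of codewords of weight w is A_w = binom(n,w) · Σ_{j=0}^{w-d} (-1)^j binom(w,j) (q^{w-d+1-j} - 1). -/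
/-!
If every nonzero codeword has weight `> n - k`, then restricting codewords to any `k` coordinates
is injective, hence bijective, so restricting to at most `k` coordinates is surjective. By
rank–nullity, the codewords supported inside a set `T` of coordinates form a space of dimension
`|T| - (n - k)` (truncated at `0`). Inclusion–exclusion over the coordinates of `S` then counts
the codewords with support exactly `S`; the count depends only on `|S| = w`, and summing over the
`binom(n, w)` supports gives `A_w`.
-/

open Finset Function

def hammingSupport {ι M : Type*} [Fintype ι] [Zero M] [DecidableEq M] (x : ι → M) : Finset ι :=
  {i | x i ≠ 0}

theorem hammingSupport_subset_iff {ι M : Type*} [Fintype ι] [Zero M] [DecidableEq M]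
    {x : ι → M} {T : Finset ι} : hammingSupport x ⊆ T ↔ ∀ i ∉ T, x i = 0 := by
  simp only [hammingSupport, subset_iff, mem_filter, mem_univ, true_and]
  exact ⟨fun h i hi => by_contra fun hx => hi (h hx), fun h i hx => by_contra fun hi => hx (h i hi)⟩

theorem card_filter_hammingNorm_eq_sum_powersetCard {ι M : Type*} [Fintype ι] [DecidableEq ι]
    [Zero M] [DecidableEq M] (s : Finset (ι → M)) (w : ℕ) :
    #{x ∈ s | hammingNorm x = w} =
      ∑ S ∈ powersetCard w univ, #{x ∈ s | hammingSupport x = S} := by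
  rw [card_eq_sum_card_fiberwise (s := {x ∈ s | hammingNorm x = w}) (t := powersetCard w univ)
    (f := hammingSupport) fun x hx =>
    mem_powersetCard.mpr ⟨subset_univ _, (mem_filter.mp hx).2⟩]
  refine sum_congr rfl fun S hS => ?_
  rw [filter_filter]
  congr 1
  refine filter_congr fun x _ => ⟨fun h => h.2, fun h => ⟨?_, h⟩⟩
  rw [← (mem_powersetCard.mp hS).2, ← h]
  rfl

theorem sum_powerset_ite_subset_sdiff {ι : Type*} [DecidableEq ι] (R S : Finset ι) :
    ∑ t ∈ S.powerset, (if R ⊆ S \ t then (-1 : ℤ) ^ #t else 0) = if R = S then 1 else 0 := by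
  rw [← sum_filter]
  by_cases hRS : R ⊆ S
  · have hfilter : {t ∈ S.powerset | R ⊆ S \ t} = (S \ R).powerset := by
      ext t
      simp only [mem_filter, mem_powerset, subset_sdiff, hRS, true_and, disjoint_comm]
    have hRS' : R = S ↔ S ⊆ R := Subset.antisymm_iff.trans (and_iff_right hRS)
    simp only [hfilter, sum_powerset_neg_one_pow_card, sdiff_eq_empty_iff_subset, hRS']
  · rw [filter_false_of_mem fun t _ h => hRS (h.trans sdiff_subset), sum_empty,
      if_neg fun h => hRS h.subset]

theorem card_filter_eq_eq_sum_powerset_neg_one_pow {α ι : Type*} [DecidableEq ι]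
    (s : Finset α) (σ : α → Finset ι) (S : Finset ι) :
    (#{x ∈ s | σ x = S} : ℤ) = ∑ t ∈ S.powerset, (-1) ^ #t * (#{x ∈ s | σ x ⊆ S \ t} : ℤ) := by
  simp only [card_filter, Nat.cast_sum, Nat.cast_ite, Nat.cast_one, Nat.cast_zero, mul_sum]
  rw [sum_comm]
  refine sum_congr rfl fun x _ => ?_
  rw [← sum_powerset_ite_subset_sdiff (σ x) S]
  refine sum_congr rfl fun t _ => ?_
  split_ifs <;> simp

theorem alternating_sum_choose_mul_pow_sub {R : Type*} [CommRing R] (q : R) {e w : ℕ}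
    (hew : e < w) :
    ∑ j ∈ range (w + 1), (-1) ^ j * (w.choose j : R) * q ^ (w - j - e) =
      ∑ j ∈ range (w - e), (-1) ^ j * (w.choose j : R) * (q ^ (w - e - j) - 1) := by
  have hzero : ∑ j ∈ range (w + 1), (-1) ^ j * (w.choose j : R) = 0 := by
    simpa using congrArg (Int.cast : ℤ → R)
      (Int.alternating_sum_range_choose_of_ne (n := w) (by omega))
  have htail : ∀ j ∈ range (w + 1), j ∉ range (w - e) →
      (-1) ^ j * (w.choose j : R) * (q ^ (w - e - j) - 1) = 0 := by
    intro j _ hj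
    rw [mem_range, not_lt] at hj
    rw [Nat.sub_eq_zero_of_le hj, pow_zero, sub_self, mul_zero]
  rw [sum_subset (range_subset_range.mpr (by omega)) htail]
  calc ∑ j ∈ range (w + 1), (-1) ^ j * (w.choose j : R) * q ^ (w - j - e)
      = ∑ j ∈ range (w + 1), (-1) ^ j * (w.choose j : R) * (q ^ (w - e - j) - 1)
        + ∑ j ∈ range (w + 1), (-1) ^ j * (w.choose j : R) := by
        rw [← sum_add_distrib]
        refine sum_congr rfl fun j _ => ?_
        rw [Nat.sub_right_comm]
        ring
    _ = _ := by rw [hzero, add_zero]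

namespace Submodule

variable {F ι : Type*} [Field F] (C : Submodule F (ι → F))

/-- Equality in the Singleton bound `d ≤ n - k + 1`. -/
def IsMDS [Fintype ι] [DecidableEq F] : Prop :=
  ∀ x ∈ C, x ≠ 0 → Fintype.card ι - Module.finrank F C < hammingNorm x

def restrictCoords (U : Finset ι) : C →ₗ[F] (U → F) :=
  LinearMap.funLeft F F ((↑) : U → ι) ∘ₗ C.subtype

theorem mem_ker_restrictCoords {U : Finset ι} {x : C} :
    x ∈ LinearMap.ker (C.restrictCoords U) ↔ ∀ i ∈ U, (x : ι → F) i = 0 := by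
  simp [restrictCoords, funext_iff]

theorem restrictCoords_injective [Fintype ι] [DecidableEq ι] [DecidableEq F] {U : Finset ι}
    (hU : ∀ x ∈ C, x ≠ 0 → #Uᶜ < hammingNorm x) : Injective (C.restrictCoords U) := by
  rw [← LinearMap.ker_eq_bot, Submodule.eq_bot_iff]
  rintro ⟨x, hx⟩ hker
  by_contra hne
  have hsupp : hammingSupport x ⊆ Uᶜ := hammingSupport_subset_iff.mpr fun i hi =>
    (C.mem_ker_restrictCoords.mp hker) i (by simpa using hi)
  exact (hU x hx (by simpa using hne)).not_ge (card_le_card hsupp)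

variable {C}

theorem IsMDS.restrictCoords_surjective [Fintype ι] [DecidableEq ι] [DecidableEq F]
    (hC : C.IsMDS) {V : Finset ι} (hV : #V ≤ Module.finrank F C) :
    Surjective (C.restrictCoords V) := by
  have hk : Module.finrank F C ≤ #(univ : Finset ι) := by
    simpa using C.finrank_le
  obtain ⟨U, hVU, -, hU⟩ := exists_subsuperset_card_eq (subset_univ V) hV hk
  have hUinj : Injective (C.restrictCoords U) :=
    C.restrictCoords_injective (by rwa [card_compl, hU])
  have hUsurj : Surjective (C.restrictCoords U) :=
    (LinearMap.injective_iff_surjective_of_finrank_eq_finrank (by simp [hU])).mp hUinj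
  have hVU' : Injective fun i : V => (⟨i, hVU i.2⟩ : U) :=
    fun i j h => Subtype.ext (Subtype.mk.inj h)
  exact (LinearMap.funLeft_surjective_of_injective F F _ hVU').comp hUsurj

/-- The truncated subtraction in the exponent is intended: for `#T < n - k` only `0` is
supported in `T`. -/
theorem IsMDS.card_filter_hammingSupport_subset [Fintype ι] [Fintype F] [DecidableEq ι]
    [DecidableEq F] [DecidablePred (· ∈ C)] (hC : C.IsMDS) (T : Finset ι) :
    #{x | x ∈ C ∧ hammingSupport x ⊆ T} =
      Fintype.card F ^ (#T - (Fintype.card ι - Module.finrank F C)) := by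
  let e : {x // x ∈ C ∧ hammingSupport x ⊆ T} ≃ LinearMap.ker (C.restrictCoords Tᶜ) :=
    { toFun x := ⟨⟨x, x.2.1⟩, C.mem_ker_restrictCoords.mpr fun i hi =>
        hammingSupport_subset_iff.mp x.2.2 i (mem_compl.mp hi)⟩
      invFun x := ⟨x, x.1.2, hammingSupport_subset_iff.mpr fun i hi =>
        C.mem_ker_restrictCoords.mp x.2 i (mem_compl.mpr hi)⟩
      left_inv _ := rfl
      right_inv _ := rfl }
  rw [← Fintype.card_subtype, ← Nat.card_eq_fintype_card, Nat.card_congr e,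
    Module.natCard_eq_pow_finrank (K := F), Nat.card_eq_fintype_card]
  congr 1
  have hk : Module.finrank F C ≤ Fintype.card ι := by simpa using C.finrank_le
  have hTle := card_le_univ T
  by_cases hT : Fintype.card ι - #T ≤ Module.finrank F C
  · have hrank := LinearMap.finrank_range_add_finrank_ker (C.restrictCoords Tᶜ)
    rw [LinearMap.range_eq_top.mpr (hC.restrictCoords_surjective (by rwa [card_compl])),
      finrank_top, Module.finrank_fintype_fun_eq_card, Fintype.card_coe, card_compl] at hrank
    omega
  · have hinj : Injective (C.restrictCoords Tᶜ) := C.restrictCoords_injective fun x hx hne => by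
      have := hC x hx hne
      rw [compl_compl]
      omega
    rw [LinearMap.ker_eq_bot.mpr hinj, finrank_bot]
    omega

theorem IsMDS.card_filter_hammingSupport_eq [Fintype ι] [Fintype F] [DecidableEq ι]
    [DecidableEq F] [DecidablePred (· ∈ C)] (hC : C.IsMDS) (S : Finset ι) :
    (#{x | x ∈ C ∧ hammingSupport x = S} : ℤ) =
      ∑ j ∈ range (#S + 1), (-1) ^ j * ((#S).choose j : ℤ) *
        (Fintype.card F : ℤ) ^ (#S - j - (Fintype.card ι - Module.finrank F C)) := by
  set e := Fintype.card ι - Module.finrank F C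
  set q : ℤ := (Fintype.card F : ℤ)
  have hincl := card_filter_eq_eq_sum_powerset_neg_one_pow {x | x ∈ C} hammingSupport S
  simp only [filter_filter] at hincl
  calc (#{x | x ∈ C ∧ hammingSupport x = S} : ℤ)
      = ∑ t ∈ S.powerset, (-1) ^ #t * q ^ (#S - #t - e) := by
        rw [hincl]
        refine sum_congr rfl fun t ht => ?_
        rw [hC.card_filter_hammingSupport_subset, card_sdiff_of_subset (mem_powerset.mp ht)]
        push_cast
        rfl
    _ = ∑ j ∈ range (#S + 1), (#S).choose j • ((-1) ^ j * q ^ (#S - j - e)) :=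
        sum_powerset_apply_card fun j => (-1) ^ j * q ^ (#S - j - e)
    _ = _ := sum_congr rfl fun j _ => by rw [nsmul_eq_mul]; ring

end Submodule

/-- **Weight distribution of MDS codes.** If `C` is an `[n,k,d]` MDS code over `F_q`
(`d = n - k + 1`), then for each `d ≤ w ≤ n`:
`A_w = C(n,w) ∑_{j=0}^{w-d} (-1)^j C(w,j) (q^{w-d+1-j} - 1)`. -/
theorem mds_weight_distribution
    (q n k d : ℕ) (F : Type*) [Field F] [Fintype F] [DecidableEq F]
    (hq : Fintype.card F = q)
    (C : Submodule F (Fin n → F)) (hk : Module.finrank F C = k)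
    (hd : IsLeast {w : ℕ | ∃ x : Fin n → F,
      x ∈ C ∧ x ≠ 0 ∧ hammingNorm x = w} d)
    (hmds : d = n - k + 1)
    (A : ℕ → ℕ)
    (hA : ∀ s, A s = Nat.card {x : Fin n → F // x ∈ C ∧ hammingNorm x = s}) :
    ∀ w, d ≤ w → w ≤ n →
      (A w : ℚ) = (n.choose w : ℚ) *
        ∑ j ∈ range (w - d + 1), (-1 : ℚ) ^ j * (w.choose j : ℚ) *
          ((q : ℚ) ^ (w - d + 1 - j) - 1) := by
  classical
  intro w hdw hwn
  have hC : C.IsMDS := fun x hx hne => by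
    have := hd.2 ⟨x, hx, hne, rfl⟩
    rw [Fintype.card_fin, hk]
    omega
  have hAw : A w = ∑ S ∈ powersetCard w univ, #{x | x ∈ C ∧ hammingSupport x = S} := by
    have := card_filter_hammingNorm_eq_sum_powersetCard ({x | x ∈ C} : Finset (Fin n → F)) w
    simp only [filter_filter] at this
    rw [hA, Nat.card_eq_fintype_card, Fintype.card_subtype, this]
  have hsupp : ∀ S ∈ powersetCard w univ, (#{x | x ∈ C ∧ hammingSupport x = S} : ℚ) =
      ∑ j ∈ range (w - d + 1), (-1 : ℚ) ^ j * (w.choose j : ℚ) *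
        ((q : ℚ) ^ (w - d + 1 - j) - 1) := by
    intro S hS
    have hcount := hC.card_filter_hammingSupport_eq S
    rw [(mem_powersetCard.mp hS).2, alternating_sum_choose_mul_pow_sub _ (by simp; omega),
      Fintype.card_fin, hk, hq, show w - (n - k) = w - d + 1 by omega] at hcount
    exact_mod_cast hcount
  rw [hAw, Nat.cast_sum, sum_congr rfl hsupp, sum_const, card_powersetCard, card_univ,
    Fintype.card_fin, nsmul_eq_mul]
end

section
/- Let C be a near-MDS [n,k,n-k] code over F_q, i.e., d = n-k and the dual code has minimum distance d⊥ = k. Then for every i with 1 ≤ i ≤ k, A_{n-k+i} = binom(n, k-i) · Σ_{j=0}^{i-1} (-1)^j binom(n-k+i, j)(q^{i-j} - 1) + (-1)^i binom(k,i) A_{n-k}. -/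
open Finset

/-!
Let `g S` be the number of codewords with support exactly `S`, so that `∑_{U ⊆ T} g U` counts
the codewords vanishing outside `T`. With `d = n - k`, this count is `1` when `|T| < d` and
`1 + g T` when `|T| = d`, by the minimum distance. When `|T| > d`, fewer than `k` coordinates lie
outside `T`, and projecting `C` onto them is onto: a functional vanishing on the image would be a
nonzero dual codeword of weight `< k`. The kernel then has `q ^ (|T| - d)` elements. Möbius
inversion on the Boolean lattice recovers `g S` for `|S| = d + i`. Summed over all such `S`, the
powers of `q` give the binomial sum, and every support of size `d` is counted `C(k, i)` times with
sign `(-1) ^ i`.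
-/

namespace Finset

variable {α : Type*} [DecidableEq α]

theorem sum_Icc_neg_one_pow_card_sub {U S : Finset α} (hUS : U ⊆ S) :
    ∑ T ∈ Icc U S, (-1 : ℤ) ^ (#S - #T) = if U = S then 1 else 0 := by
  have hreflect : ∑ T ∈ Icc U S, (-1 : ℤ) ^ (#S - #T) = ∑ V ∈ (S \ U).powerset, (-1 : ℤ) ^ #V := by
    refine sum_nbij' (S \ ·) (S \ ·) ?_ ?_ ?_ ?_ ?_
    · intro T hT
      rw [mem_Icc] at hT
      rw [mem_powerset]
      exact sdiff_subset_sdiff subset_rfl hT.1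
    · intro V hV
      rw [mem_powerset] at hV
      rw [mem_Icc]
      exact ⟨subset_sdiff.2 ⟨hUS, disjoint_of_subset_right hV disjoint_sdiff⟩, sdiff_subset⟩
    · intro T hT
      exact sdiff_sdiff_eq_self (mem_Icc.1 hT).2
    · intro V hV
      exact sdiff_sdiff_eq_self ((mem_powerset.1 hV).trans sdiff_subset)
    · intro T hT
      rw [card_sdiff_of_subset (mem_Icc.1 hT).2]
  rw [hreflect, sum_powerset_neg_one_pow_card]
  exact if_congr (sdiff_eq_empty_iff_subset.trans ⟨hUS.antisymm, fun h => h ▸ subset_rfl⟩) rfl rfl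

theorem sum_powerset_neg_one_pow_card_sub_smul_sum_powerset {G : Type*} [AddCommGroup G]
    (g : Finset α → G) (S : Finset α) :
    ∑ T ∈ S.powerset, (-1 : ℤ) ^ (#S - #T) • ∑ U ∈ T.powerset, g U = g S := by
  simp_rw [smul_sum]
  rw [sum_comm' (s' := fun U => Icc U S) (t' := S.powerset)]
  · simp_rw [← sum_smul]
    rw [sum_congr rfl fun U hU => by rw [sum_Icc_neg_one_pow_card_sub (mem_powerset.1 hU)]]
    simp
  · intro T U
    simp only [mem_powerset, mem_Icc]
    exact ⟨fun ⟨hTS, hUT⟩ => ⟨⟨hUT, hTS⟩, hUT.trans hTS⟩, fun ⟨⟨hUT, hTS⟩, _⟩ => ⟨hTS, hUT⟩⟩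

theorem sum_powersetCard_sum_powersetCard {M : Type*} [AddCommMonoid M] (X : Finset α)
    (h : Finset α → M) {d w : ℕ} (hdw : d ≤ w) :
    ∑ S ∈ X.powersetCard w, ∑ T ∈ S.powersetCard d, h T =
      (#X - d).choose (w - d) • ∑ T ∈ X.powersetCard d, h T := by
  rw [sum_comm' (s' := fun T => (X.powersetCard w).filter (T ⊆ ·)) (t' := X.powersetCard d)]
  · rw [smul_sum]
    refine sum_congr rfl fun T hT => ?_
    obtain ⟨hTX, hTd⟩ := mem_powersetCard.1 hT
    rw [sum_const, card_filter_powersetCard_subset T X w hTX (hTd ▸ hdw), hTd]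
  · intro S T
    simp only [mem_powersetCard, mem_filter]
    exact ⟨fun ⟨⟨hSX, hSw⟩, hTS, hTd⟩ => ⟨⟨⟨hSX, hSw⟩, hTS⟩, hTS.trans hSX, hTd⟩,
      fun ⟨⟨⟨hSX, hSw⟩, hTS⟩, _, hTd⟩ => ⟨⟨hSX, hSw⟩, hTS, hTd⟩⟩

end Finset

theorem sum_range_choose_mul_neg_one_pow_mul_pow_sub {R : Type*} [CommRing R] (Q : R)
    {d i : ℕ} (hdi : d + i ≠ 0) :
    ∑ m ∈ range (d + i + 1), ((d + i).choose m : R) * ((-1) ^ (d + i - m) * Q ^ (m - d)) =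
      ∑ j ∈ range i, (-1) ^ j * ((d + i).choose j : R) * (Q ^ (i - j) - 1) := by
  set w := d + i
  have halt : ∑ j ∈ range (w + 1), (-1 : R) ^ j * (w.choose j : R) = 0 := by
    exact_mod_cast congrArg (Int.cast : ℤ → R) (Int.alternating_sum_range_choose_of_ne hdi)
  have htail : ∀ j ∈ range (w + 1), j ∉ range i →
      (-1 : R) ^ j * (w.choose j : R) * (Q ^ (i - j) - 1) = 0 := by
    intro j _ hj
    rw [mem_range, not_lt, ← Nat.sub_eq_zero_iff_le] at hj
    rw [hj, pow_zero, sub_self, mul_zero]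
  rw [← sum_range_reflect, sum_subset (range_subset_range.2 (by omega)) htail,
    ← sub_eq_zero, ← sum_sub_distrib, ← halt]
  refine sum_congr rfl fun j hj => ?_
  have hjw : j ≤ w := Nat.lt_succ_iff.1 (mem_range.1 hj)
  rw [show w + 1 - 1 - j = w - j by omega, show w - (w - j) = j by omega,
    show w - j - d = i - j by omega, Nat.choose_symm hjw]
  ring

theorem sum_powersetCard_eq_of_sum_powerset_eq {α R : Type*} [DecidableEq α] [CommRing R]
    (X : Finset α) (g : Finset α → R) (Q : R) {d i : ℕ} (hdi : d + i ≠ 0)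
    (hg : ∀ T ⊆ X, ∑ U ∈ T.powerset, g U = Q ^ (#T - d) + if #T = d then g T else 0) :
    ∑ S ∈ X.powersetCard (d + i), g S =
      (#X).choose (d + i) * ∑ j ∈ range i, (-1) ^ j * ((d + i).choose j : R) * (Q ^ (i - j) - 1)
        + (-1) ^ i * (#X - d).choose i * ∑ T ∈ X.powersetCard d, g T := by
  set w := d + i
  have hsplit : ∀ S ∈ X.powersetCard w, g S =
      ∑ T ∈ S.powerset, (-1) ^ (w - #T) * Q ^ (#T - d) +
        ∑ T ∈ S.powersetCard d, (-1) ^ i * g T := by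
    intro S hS
    obtain ⟨hSX, hSw⟩ := mem_powersetCard.1 hS
    rw [← sum_powerset_neg_one_pow_card_sub_smul_sum_powerset g S, hSw, powersetCard_eq_filter,
      sum_filter, ← sum_add_distrib]
    refine sum_congr rfl fun T hT => ?_
    rw [hg T ((mem_powerset.1 hT).trans hSX), zsmul_eq_mul]
    split_ifs with hTd
    · rw [hTd, show w - d = i by omega]
      push_cast
      ring
    · push_cast
      ring
  have hfirst : ∀ S ∈ X.powersetCard w, ∑ T ∈ S.powerset, (-1 : R) ^ (w - #T) * Q ^ (#T - d) =
      ∑ j ∈ range i, (-1) ^ j * (w.choose j : R) * (Q ^ (i - j) - 1) := by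
    intro S hS
    rw [sum_powerset_apply_card (fun m => (-1 : R) ^ (w - m) * Q ^ (m - d)),
      (mem_powersetCard.1 hS).2, ← sum_range_choose_mul_neg_one_pow_mul_pow_sub Q hdi]
    simp only [nsmul_eq_mul, w]
  rw [sum_congr rfl hsplit, sum_add_distrib, sum_congr rfl hfirst, sum_const, card_powersetCard,
    sum_powersetCard_sum_powersetCard X _ (by omega), ← mul_sum, nsmul_eq_mul, nsmul_eq_mul,
    show w - d = i by omega]
  ring

theorem Nat.card_subtype_eq_sum_card_fiberwise {α β : Type*} [Finite α] [DecidableEq β]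
    {P : α → Prop} {f : α → β} {s : Finset β} (H : ∀ x, P x → f x ∈ s) :
    Nat.card {x // P x} = ∑ b ∈ s, Nat.card {x // P x ∧ f x = b} := by
  classical
  have := Fintype.ofFinite α
  simp only [Nat.card_eq_fintype_card, Fintype.card_subtype]
  rw [card_eq_sum_card_fiberwise fun x hx => H x (mem_filter.1 hx).2]
  simp only [filter_filter]

section LinearCode

variable {ι F : Type*} [Fintype ι] [Field F]

def coordRestrict (C : Submodule F (ι → F)) (J : Finset ι) : C →ₗ[F] (J → F) :=
  (LinearMap.funLeft F F ((↑) : J → ι)).comp C.subtype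

theorem coordRestrict_surjective {C : Submodule F (ι → F)} {J : Finset ι}
    (h : ∀ y : ι → F, (∀ x ∈ C, ∑ i, x i * y i = 0) → (∀ i ∉ J, y i = 0) → y = 0) :
    Function.Surjective (coordRestrict C J) := by
  classical
  by_contra hns
  obtain ⟨ψ, hψ0, hψC⟩ := Submodule.exists_dual_map_eq_bot_of_lt_top
    (lt_top_iff_ne_top.2 fun h => hns (LinearMap.range_eq_top.1 h)) inferInstance
  set π := LinearMap.funLeft F F ((↑) : J → ι)
  set y : ι → F := fun i => ψ (π fun j => if i = j then 1 else 0)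
  have hdot : ∀ x, ψ (π x) = ∑ i, x i * y i := fun x => LinearMap.pi_apply_eq_sum_univ (ψ ∘ₗ π) x
  have hy : y = 0 := by
    refine h y (fun x hx => ?_) (fun i hi => ?_)
    · rw [← hdot]
      exact (Submodule.mem_bot F).1 (hψC ▸ Submodule.mem_map_of_mem
        (LinearMap.mem_range_self (coordRestrict C J) ⟨x, hx⟩))
    · have : (π fun j => if i = j then (1 : F) else 0) = 0 := by
        funext j
        exact if_neg fun hij : i = j => hi (hij ▸ j.2)
      simp only [y, this, map_zero]
  refine hψ0 (LinearMap.ext fun v => ?_)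
  obtain ⟨x, rfl⟩ := LinearMap.funLeft_surjective_of_injective F F _ Subtype.val_injective v
  change ψ (π x) = 0
  rw [hdot, hy]
  simp

theorem card_ker_coordRestrict [Fintype F] {C : Submodule F (ι → F)} {J : Finset ι}
    (hsurj : Function.Surjective (coordRestrict C J)) :
    Nat.card (LinearMap.ker (coordRestrict C J)) = Fintype.card F ^ (Module.finrank F C - #J) := by
  have hrank := LinearMap.finrank_range_add_finrank_ker (coordRestrict C J)
  rw [LinearMap.range_eq_top.2 hsurj, finrank_top, Module.finrank_fintype_fun_eq_card,
    Fintype.card_coe] at hrank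
  rw [Module.natCard_eq_pow_finrank (K := F), Nat.card_eq_fintype_card]
  congr 1
  omega

theorem card_vanishing_outside_eq_pow [Fintype F] [DecidableEq F] {C : Submodule F (ι → F)}
    {k : ℕ} (hk : Module.finrank F C = k)
    (hdual : ∀ y : ι → F, (∀ x ∈ C, ∑ i, x i * y i = 0) → y ≠ 0 → k ≤ hammingNorm y)
    {T : Finset ι} (hT : Fintype.card ι < #T + k) :
    Nat.card {x : ι → F // x ∈ C ∧ ∀ j ∉ T, x j = 0} =
      Fintype.card F ^ (#T + k - Fintype.card ι) := by
  classical
  have hTι : #T ≤ Fintype.card ι := card_le_univ T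
  have hsurj : Function.Surjective (coordRestrict C Tᶜ) := by
    refine coordRestrict_surjective fun y hy hyT => by_contra fun hy0 => ?_
    have hsupp : ({j | y j ≠ 0} : Finset ι) ⊆ Tᶜ := fun j hj => by
      by_contra hjT
      exact (mem_filter.1 hj).2 (hyT j hjT)
    have := (hdual y hy hy0).trans (card_le_card hsupp)
    rw [card_compl] at this
    omega
  have hker : {x : ι → F // x ∈ C ∧ ∀ j ∉ T, x j = 0} ≃ LinearMap.ker (coordRestrict C Tᶜ) :=
    { toFun := fun x => ⟨⟨x, x.2.1⟩, funext fun j => x.2.2 j (mem_compl.1 j.2)⟩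
      invFun := fun x => ⟨x.1, x.1.2, fun j hj => congrFun x.2 ⟨j, mem_compl.2 hj⟩⟩
      left_inv := fun _ => rfl
      right_inv := fun _ => rfl }
  rw [Nat.card_congr hker, card_ker_coordRestrict hsurj, hk, card_compl]
  congr 1
  omega

variable [DecidableEq F] (C : Submodule F (ι → F))

noncomputable def numCodewordsWithSupport (S : Finset ι) : ℕ :=
  Nat.card {x : ι → F // x ∈ C ∧ ({j | x j ≠ 0} : Finset ι) = S}

theorem card_hammingNorm_eq_sum_numCodewordsWithSupport [Finite F] (s : ℕ) :
    Nat.card {x : ι → F // x ∈ C ∧ hammingNorm x = s} =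
      ∑ S ∈ univ.powersetCard s, numCodewordsWithSupport C S := by
  classical
  rw [Nat.card_subtype_eq_sum_card_fiberwise (f := fun x : ι → F => ({j | x j ≠ 0} : Finset ι))
    fun x hx => mem_powersetCard_univ.2 hx.2]
  refine sum_congr rfl fun S hS => Nat.card_congr (Equiv.subtypeEquivRight fun x => ?_)
  rw [← (mem_powersetCard_univ.1 hS)]
  exact ⟨fun ⟨⟨hx, _⟩, hxS⟩ => ⟨hx, hxS⟩, fun ⟨hx, hxS⟩ => ⟨⟨hx, hxS ▸ rfl⟩, hxS⟩⟩

theorem sum_powerset_numCodewordsWithSupport [Finite F] [DecidableEq ι] (T : Finset ι) :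
    ∑ U ∈ T.powerset, numCodewordsWithSupport C U =
      Nat.card {x : ι → F // x ∈ C ∧ ∀ j ∉ T, x j = 0} := by
  have hsupp : ∀ x : ι → F, (∀ j ∉ T, x j = 0) ↔ ({j | x j ≠ 0} : Finset ι) ⊆ T := fun x => by
    simp only [subset_iff, mem_filter, mem_univ, true_and]
    exact ⟨fun h j hj => by_contra fun hjT => hj (h j hjT),
      fun h j hjT => by_contra fun hj => hjT (h hj)⟩
  rw [Nat.card_subtype_eq_sum_card_fiberwise (f := fun x : ι → F => ({j | x j ≠ 0} : Finset ι))
    fun x hx => mem_powerset.2 ((hsupp x).1 hx.2)]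
  refine sum_congr rfl fun U hU => Nat.card_congr (Equiv.subtypeEquivRight fun x => ?_)
  exact ⟨fun ⟨hx, hxU⟩ => ⟨⟨hx, (hsupp x).2 (hxU ▸ mem_powerset.1 hU)⟩, hxU⟩,
    fun ⟨⟨hx, _⟩, hxU⟩ => ⟨hx, hxU⟩⟩

theorem numCodewordsWithSupport_empty : numCodewordsWithSupport C ∅ = 1 := by
  refine Nat.card_eq_one_iff_exists.2 ⟨⟨0, C.zero_mem, by simp⟩, fun ⟨x, _, hx⟩ => ?_⟩
  ext j
  by_contra hj
  simpa [hx] using (filter_eq_empty_iff.1 hx) (mem_univ j) hj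

theorem numCodewordsWithSupport_eq_zero {d : ℕ}
    (hmin : ∀ x ∈ C, x ≠ 0 → d ≤ hammingNorm x) {S : Finset ι} (hS : S.Nonempty) (hSd : #S < d) :
    numCodewordsWithSupport C S = 0 := by
  refine Nat.card_eq_zero.2 (Or.inl ⟨fun ⟨x, hx, hxS⟩ => ?_⟩)
  have hx0 : x ≠ 0 := by
    rintro rfl
    simp [← hxS] at hS
  have := hmin x hx hx0
  rw [hammingNorm, hxS] at this
  omega

theorem sum_powerset_numCodewordsWithSupport_eq_pow_add [Fintype F] [DecidableEq ι] {d k : ℕ}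
    (hmin : ∀ x ∈ C, x ≠ 0 → d ≤ hammingNorm x) (hd : d ≠ 0) (hk : Module.finrank F C = k)
    (hdual : ∀ y : ι → F, (∀ x ∈ C, ∑ i, x i * y i = 0) → y ≠ 0 → k ≤ hammingNorm y)
    (hdk : d + k = Fintype.card ι) (T : Finset ι) :
    ∑ U ∈ T.powerset, numCodewordsWithSupport C U =
      Fintype.card F ^ (#T - d) + if #T = d then numCodewordsWithSupport C T else 0 := by
  rcases lt_or_ge d #T with hdT | hTd
  · rw [sum_powerset_numCodewordsWithSupport, card_vanishing_outside_eq_pow hk hdual (by omega),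
      if_neg (by omega), add_zero]
    congr 1
    omega
  rw [Nat.sub_eq_zero_of_le hTd, pow_zero, ← add_sum_erase _ _ (empty_mem_powerset T),
    numCodewordsWithSupport_empty]
  congr 1
  have hvanish : ∀ U ∈ T.powerset.erase ∅, #U < d → numCodewordsWithSupport C U = 0 :=
    fun U hU hUd => numCodewordsWithSupport_eq_zero C hmin
      (nonempty_iff_ne_empty.2 (mem_erase.1 hU).1) hUd
  split_ifs with hTd'
  · refine sum_eq_single_of_mem T (mem_erase.2 ⟨?_, mem_powerset_self T⟩) fun U hU hUT => ?_
    · rintro rfl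
      exact hd (hTd' ▸ card_empty)
    · exact hvanish U hU (hTd' ▸ card_lt_card
        (ssubset_of_subset_of_ne (mem_powerset.1 (mem_erase.1 hU).2) hUT))
  · exact sum_eq_zero fun U hU => hvanish U hU
      ((card_le_card (mem_powerset.1 (mem_erase.1 hU).2)).trans_lt (lt_of_le_of_ne hTd hTd'))

end LinearCode

/-- **Weight distribution of near-MDS codes.** If `C` is an `[n,k,n-k]` NMDS code over
`F_q` (minimum distance `n - k`, dual distance `k`), then for `1 ≤ i ≤ k`:
`A_{n-k+i} = C(n,k-i) ∑_{j=0}^{i-1} (-1)^j C(n-k+i,j)(q^{i-j}-1) + (-1)^i C(k,i) A_{n-k}`. -/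
theorem nmds_weight_distribution
    (q n k : ℕ) (F : Type*) [Field F] [Fintype F] [DecidableEq F]
    (hq : Fintype.card F = q)
    (C : Submodule F (Fin n → F)) (hk : Module.finrank F C = k)
    (hd : IsLeast {w : ℕ | ∃ x : Fin n → F,
      x ∈ C ∧ x ≠ 0 ∧ hammingNorm x = w} (n - k))
    (hdperp : IsLeast {w : ℕ | ∃ y : Fin n → F,
      (∀ x ∈ C, ∑ i, x i * y i = 0) ∧ y ≠ 0 ∧ hammingNorm y = w} k)
    (A : ℕ → ℕ)
    (hA : ∀ s, A s = Nat.card {x : Fin n → F // x ∈ C ∧ hammingNorm x = s}) :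
    ∀ i, 1 ≤ i → i ≤ k →
      (A (n - k + i) : ℚ) = (n.choose (k - i) : ℚ) *
          (∑ j ∈ range i, (-1 : ℚ) ^ j * ((n - k + i).choose j : ℚ) *
            ((q : ℚ) ^ (i - j) - 1))
        + (-1 : ℚ) ^ i * (k.choose i : ℚ) * A (n - k) := by
  intro i hi hik
  subst hq
  have hkn : k ≤ n := by
    simpa [hk] using Submodule.finrank_le C
  have hd0 : n - k ≠ 0 := by
    obtain ⟨x, -, hx0, hxw⟩ := hd.1
    exact hxw ▸ (hammingNorm_pos_iff.2 hx0).ne'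
  have hg : ∀ T ⊆ (univ : Finset (Fin n)),
      ∑ U ∈ T.powerset, (numCodewordsWithSupport C U : ℚ) = (Fintype.card F : ℚ) ^ (#T - (n - k)) +
        if #T = n - k then (numCodewordsWithSupport C T : ℚ) else 0 := fun T _ => by
    exact_mod_cast sum_powerset_numCodewordsWithSupport_eq_pow_add C
      (fun x hx hx0 => hd.2 ⟨x, hx, hx0, rfl⟩) hd0 hk
      (fun y hy hy0 => hdperp.2 ⟨y, hy, hy0, rfl⟩) (by simp [hkn]) T
  have hA' : ∀ s, (A s : ℚ) = ∑ S ∈ univ.powersetCard s, (numCodewordsWithSupport C S : ℚ) :=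
    fun s => by rw [hA, card_hammingNorm_eq_sum_numCodewordsWithSupport, Nat.cast_sum]
  rw [hA', hA', sum_powersetCard_eq_of_sum_powerset_eq univ _ _ (by omega) hg, card_univ,
    Fintype.card_fin, show n - (n - k) = k by omega,
    Nat.choose_symm_of_eq_add (show n = (n - k + i) + (k - i) by omega)]
end

section
/- Let C be an extremal doubly-even self-dual binary code of parameters [24m, 12m, 4m+4], with weight distribution satisfying A_i = 0 for i not divisible by 4 and A_i = A_{24m-i}. Then for each ν with 20m-4 < ν ≤ 24m, Σ_{ℓ=1}^{4m-1} binom(20m-4ℓ, ν-4m-4ℓ) A_{4m+4ℓ} = binom(24m, ν)(2^{ν-12m} - 1) - δ(24m, ν), where δ is the Kronecker delta. -/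
open Finset Module

/-!
Fix `ν` and a `ν`-set `S` of coordinates, with complement `T`. Since
`|T| = 24m - ν < 4m + 4 = d⊥`, no nonzero dual codeword is supported on `T`, so restricting `C`
to `T` is surjective and the codewords supported in `S` form a space of dimension
`12m - |T| = ν - 12m`. Counting the pairs `(x, S)` with `x ∈ C` supported in `S` in two ways
gives `∑_w A_w binom(24m - w, ν - w) = binom(24m, ν) 2^(ν - 12m)`, and only the weights `0`,
`24m` and `4m + 4ℓ` with `1 ≤ ℓ ≤ 4m - 1` contribute to the left side.
-/

section Restriction

variable {K ι : Type*} [Field K]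

def restrictCoords (C : Submodule K (ι → K)) (T : Finset ι) : C →ₗ[K] (T → K) :=
  LinearMap.funLeft K K ((↑) : T → ι) ∘ₗ C.subtype

theorem mem_ker_restrictCoords {C : Submodule K (ι → K)} {T : Finset ι} {x : C} :
    x ∈ LinearMap.ker (restrictCoords C T) ↔ ∀ i ∈ T, (x : ι → K) i = 0 := by
  simp [restrictCoords, funext_iff, LinearMap.funLeft]

variable [Fintype ι] [DecidableEq ι]

/-- A nonzero functional vanishing on the range would be the dot product with a nonzero vector
supported on `T` and orthogonal to `C`. -/
theorem restrictCoords_surjective {C : Submodule K (ι → K)} {T : Finset ι}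
    (h : ∀ y : ι → K, (∀ x ∈ C, x ⬝ᵥ y = 0) → (∀ i ∉ T, y i = 0) → y = 0) :
    Function.Surjective (restrictCoords C T) := by
  rw [← LinearMap.range_eq_top]
  by_contra hne
  obtain ⟨φ, hφ, hφC⟩ :=
    Submodule.exists_dual_map_eq_bot_of_lt_top (lt_top_iff_ne_top.2 hne) inferInstance
  set ψ := φ ∘ₗ LinearMap.funLeft K K ((↑) : T → ι)
  set y := (dotProductEquiv K ι).symm ψ
  have hy : ∀ v, y ⬝ᵥ v = ψ v := fun v =>
    congr($((dotProductEquiv K ι).apply_symm_apply ψ) v)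
  have hy0 : y = 0 := by
    refine h y (fun x hx => ?_) (fun i hi => ?_)
    · rw [dotProduct_comm, hy]
      exact (Submodule.eq_bot_iff _).1 hφC _ ⟨_, ⟨⟨x, hx⟩, rfl⟩, rfl⟩
    · have : LinearMap.funLeft K K ((↑) : T → ι) (Pi.single i 1) = 0 := by
        ext j
        simp [LinearMap.funLeft, ne_of_mem_of_not_mem j.2 hi]
      simp [y, ψ, this]
  refine hφ (LinearMap.ext fun v => ?_)
  obtain ⟨w, rfl⟩ := LinearMap.funLeft_surjective_of_injective K K _ Subtype.val_injective v
  rw [LinearMap.zero_apply, ← LinearMap.comp_apply, ← hy, hy0, zero_dotProduct]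

theorem finrank_ker_restrictCoords {C : Submodule K (ι → K)} {T : Finset ι}
    (h : ∀ y : ι → K, (∀ x ∈ C, x ⬝ᵥ y = 0) → (∀ i ∉ T, y i = 0) → y = 0) :
    finrank K (LinearMap.ker (restrictCoords C T)) = finrank K C - #T := by
  have := LinearMap.finrank_range_add_finrank_ker (restrictCoords C T)
  rw [LinearMap.range_eq_top.2 (restrictCoords_surjective h), finrank_top,
    finrank_fintype_fun_eq_card, Fintype.card_coe] at this
  omega

theorem card_supported_eq_pow {C : Submodule K (ι → K)} {S : Finset ι}
    (h : ∀ y : ι → K, (∀ x ∈ C, x ⬝ᵥ y = 0) → (∀ i ∈ S, y i = 0) → y = 0) :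
    Nat.card {x : ι → K // x ∈ C ∧ ∀ i, x i ≠ 0 → i ∈ S}
      = Nat.card K ^ (finrank K C - #Sᶜ) := by
  rw [← finrank_ker_restrictCoords (T := Sᶜ) (by simpa using h),
    ← natCard_eq_pow_finrank (V := LinearMap.ker (restrictCoords C Sᶜ))]
  refine Nat.card_congr ((Equiv.subtypeSubtypeEquivSubtypeInter (· ∈ C) _).symm.trans
    (Equiv.subtypeEquivRight fun x => ?_))
  rw [mem_ker_restrictCoords]
  simp only [mem_compl]
  exact forall_congr' fun i => not_imp_comm

-- Without the guard, truncated subtraction would give `(n - w).choose 0 = 1` for `w > ν`.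
def numSupersets (n ν w : ℕ) : ℕ := if w ≤ ν then (n - w).choose (ν - w) else 0

theorem numSupersets_zero (n ν : ℕ) : numSupersets n ν 0 = n.choose ν := by
  simp [numSupersets]

theorem numSupersets_self {n ν : ℕ} (hν : ν ≤ n) :
    numSupersets n ν n = if ν = n then 1 else 0 := by
  unfold numSupersets
  by_cases h : ν = n
  · simp [h]
  · simp [h, show ¬n ≤ ν by omega]

section HammingWeight

variable {R ι : Type*} [Zero R] [DecidableEq R] [Fintype ι]

theorem card_hammingNorm_eq_zero {X : Set (ι → R)} (h0 : 0 ∈ X) :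
    Nat.card {x // x ∈ X ∧ hammingNorm x = 0} = 1 := by
  rw [Nat.card_eq_one_iff_exists]
  exact ⟨⟨0, h0, hammingNorm_zero⟩, fun x => Subtype.ext (hammingNorm_eq_zero.1 x.2.2)⟩

theorem card_hammingNorm_eq_of_lt {X : Set (ι → R)} {d w : ℕ}
    (hd : ∀ x ∈ X, x ≠ 0 → d ≤ hammingNorm x) (hw : 0 < w) (hwd : w < d) :
    Nat.card {x // x ∈ X ∧ hammingNorm x = w} = 0 := by
  rw [Nat.card_eq_zero]
  refine Or.inl ⟨fun ⟨x, hx, hxw⟩ => ?_⟩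
  have hx0 : x ≠ 0 := by rintro rfl; rw [hammingNorm_zero] at hxw; omega
  exact absurd (hd x hx hx0) (by omega)

variable [DecidableEq ι]

theorem hammingNorm_le_card_of_forall_eq_zero {y : ι → R} {S : Finset ι}
    (hy : ∀ i ∈ S, y i = 0) : hammingNorm y ≤ #Sᶜ :=
  card_le_card fun i hi => mem_compl.2 fun hiS => (mem_filter.1 hi).2 (hy i hiS)

theorem card_filter_powersetCard_univ_subset (s : Finset ι) (ν : ℕ) :
    #{S ∈ univ.powersetCard ν | s ⊆ S} = numSupersets (Fintype.card ι) ν #s := by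
  unfold numSupersets
  split_ifs with hs
  · rw [card_filter_powersetCard_subset s univ ν (subset_univ s) hs, card_univ]
  · rw [card_eq_zero, filter_eq_empty_iff]
    intro S hS hsS
    exact hs ((mem_powersetCard.1 hS).2 ▸ card_le_card hsS)

theorem sum_card_supported_eq_sum_numSupersets (X : Finset (ι → R)) (ν : ℕ) :
    ∑ S ∈ univ.powersetCard ν, #{x ∈ X | ∀ i, x i ≠ 0 → i ∈ S}
      = ∑ x ∈ X, numSupersets (Fintype.card ι) ν (hammingNorm x) := by
  simp_rw [card_filter]
  rw [sum_comm]
  refine sum_congr rfl fun x _ => ?_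
  rw [hammingNorm, ← card_filter_powersetCard_univ_subset, card_filter]
  simp [subset_iff]

theorem sum_card_hammingNorm_mul_numSupersets [Fintype R] (X : Set (ι → R)) {ν N : ℕ}
    (hN : ∀ S : Finset ι, #S = ν →
      Nat.card {x // x ∈ X ∧ ∀ i, x i ≠ 0 → i ∈ S} = N) :
    ∑ w ∈ range (Fintype.card ι + 1),
        Nat.card {x // x ∈ X ∧ hammingNorm x = w} * numSupersets (Fintype.card ι) ν w
      = (Fintype.card ι).choose ν * N := by
  classical
  have hcard (p : (ι → R) → Prop) [DecidablePred p] :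
      #{x ∈ univ.filter (· ∈ X) | p x} = Nat.card {x // x ∈ X ∧ p x} := by
    rw [filter_filter, Nat.card_eq_fintype_card, Fintype.card_subtype]
  have hweight : ∀ x ∈ univ.filter (· ∈ X), hammingNorm x ∈ range (Fintype.card ι + 1) :=
    fun x _ => mem_range_succ_iff.2 hammingNorm_le_card_fintype
  calc ∑ w ∈ range (Fintype.card ι + 1),
        Nat.card {x // x ∈ X ∧ hammingNorm x = w} * numSupersets (Fintype.card ι) ν w
      = ∑ x ∈ univ.filter (· ∈ X), numSupersets (Fintype.card ι) ν (hammingNorm x) := by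
        rw [← sum_fiberwise_of_maps_to hweight]
        refine sum_congr rfl fun w _ => ?_
        rw [sum_congr rfl fun x hx => by rw [(mem_filter.1 hx).2], sum_const, smul_eq_mul,
          hcard]
    _ = ∑ S ∈ univ.powersetCard ν,
          #{x ∈ univ.filter (· ∈ X) | ∀ i, x i ≠ 0 → i ∈ S} :=
        (sum_card_supported_eq_sum_numSupersets _ ν).symm
    _ = (Fintype.card ι).choose ν * N := by
        rw [sum_congr rfl fun S hS => (hcard _).trans (hN S (mem_powersetCard.1 hS).2),
          sum_const, card_powersetCard, card_univ, smul_eq_mul]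

end HammingWeight

theorem card_supported_eq_pow_of_card_compl_lt {K ι : Type*} [Field K] [DecidableEq K]
    [Fintype ι] [DecidableEq ι] {C : Submodule K (ι → K)} {d : ℕ}
    (hdual : ∀ y : ι → K, (∀ x ∈ C, x ⬝ᵥ y = 0) → y ≠ 0 → d ≤ hammingNorm y)
    {S : Finset ι} (hS : #Sᶜ < d) :
    Nat.card {x : ι → K // x ∈ C ∧ ∀ i, x i ≠ 0 → i ∈ S}
      = Nat.card K ^ (finrank K C - #Sᶜ) :=
  card_supported_eq_pow fun y hy hyS => by
    by_contra hy0
    exact absurd (hammingNorm_le_card_of_forall_eq_zero hyS) (by linarith [hdual y hy hy0])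

theorem extremal_weight_cases {m w : ℕ} {A : ℕ → ℕ} (hdiv : ∀ i, ¬ 4 ∣ i → A i = 0)
    (hsymm : ∀ i ≤ 24 * m, A i = A (24 * m - i))
    (hgap : ∀ i, 0 < i → i < 4 * m + 4 → A i = 0)
    (hw : w ≤ 24 * m) (hAw : A w ≠ 0) :
    w = 0 ∨ w = 24 * m ∨ ∃ ℓ ∈ Icc 1 (4 * m - 1), w = 4 * m + 4 * ℓ := by
  obtain ⟨k, rfl⟩ : 4 ∣ w := by_contra fun h => hAw (hdiv w h)
  have hlow : k = 0 ∨ m + 1 ≤ k := by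
    by_contra! h
    exact hAw (hgap _ (by omega) (by omega))
  have hhigh : k = 6 * m ∨ k ≤ 5 * m - 1 := by
    by_contra! h
    exact hAw ((hsymm _ hw).trans (hgap _ (by omega) (by omega)))
  rcases hlow with rfl | hlow
  · exact Or.inl rfl
  rcases hhigh with rfl | hhigh
  · exact Or.inr (Or.inl (by ring))
  · exact Or.inr (Or.inr ⟨k - m, mem_Icc.2 ⟨by omega, by omega⟩, by omega⟩)

theorem sum_range_eq_of_extremal_support {m : ℕ} (hm : 1 ≤ m) (f : ℕ → ℕ)
    (hf : ∀ w ≤ 24 * m, f w ≠ 0 →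
      w = 0 ∨ w = 24 * m ∨ ∃ ℓ ∈ Icc 1 (4 * m - 1), w = 4 * m + 4 * ℓ) :
    ∑ w ∈ range (24 * m + 1), f w
      = f 0 + f (24 * m) + ∑ ℓ ∈ Icc 1 (4 * m - 1), f (4 * m + 4 * ℓ) := by
  set L := (Icc 1 (4 * m - 1)).image fun ℓ => 4 * m + 4 * ℓ
  have h0 : 0 ∉ insert (24 * m) L := by
    simp only [L, mem_insert, mem_image, mem_Icc, not_or, not_exists, not_and, and_imp]
    exact ⟨by omega, fun _ _ _ => by omega⟩
  have hn : 24 * m ∉ L := by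
    simp only [L, mem_image, mem_Icc, not_exists, not_and, and_imp]
    intros; omega
  have hinj : Set.InjOn (fun ℓ => 4 * m + 4 * ℓ) (Icc 1 (4 * m - 1) : Set ℕ) :=
    fun a _ b _ h => by simp only at h; omega
  rw [← sum_image hinj, add_assoc, ← sum_insert hn, ← sum_insert h0]
  refine (sum_subset (fun w hw => ?_) fun w hw hwL => ?_).symm
  · simp only [mem_insert, L, mem_image, mem_Icc] at hw
    rcases hw with rfl | rfl | ⟨ℓ, hℓ, rfl⟩ <;> simp only [mem_range] <;> omega
  · by_contra hfw
    rcases hf w (mem_range_succ_iff.1 hw) hfw with rfl | rfl | ⟨ℓ, hℓ, rfl⟩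
    · simp at hwL
    · simp at hwL
    · exact hwL (mem_insert_of_mem (mem_insert_of_mem (mem_image_of_mem _ hℓ)))

theorem extremal_code_relations_general
    (m : ℕ)
    (C : Submodule (ZMod 2) (Fin (24 * m) → ZMod 2))
    (hk : Module.finrank (ZMod 2) C = 12 * m)
    (hselfdual : ∀ y : Fin (24 * m) → ZMod 2,
      y ∈ C ↔ ∀ x ∈ C, ∑ i, x i * y i = 0)
    (hd : IsLeast {w : ℕ | ∃ x : Fin (24 * m) → ZMod 2,
      x ∈ C ∧ x ≠ 0 ∧ hammingNorm x = w} (4 * m + 4))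
    (A : ℕ → ℕ)
    (hA : ∀ s, A s = Nat.card {x : Fin (24 * m) → ZMod 2 //
      x ∈ C ∧ hammingNorm x = s})
    (hdiv : ∀ i, ¬ (4 ∣ i) → A i = 0)
    (hsymm : ∀ i ≤ 24 * m, A i = A (24 * m - i)) :
    ∀ ν, 20 * m - 4 < ν → ν ≤ 24 * m →
      ∑ ℓ ∈ Icc 1 (4 * m - 1),
          (if 4 * m + 4 * ℓ ≤ ν then
            (((20 * m - 4 * ℓ).choose (ν - (4 * m + 4 * ℓ))) : ℚ) else 0) * A (4 * m + 4 * ℓ)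
        = ((24 * m).choose ν : ℚ) * ((2 : ℚ) ^ (ν - 12 * m) - 1)
          - (if ν = 24 * m then 1 else 0) := by
  intro ν hν₁ hν₂
  have hmin : ∀ x ∈ C, x ≠ 0 → 4 * m + 4 ≤ hammingNorm x :=
    fun x hx hx0 => hd.2 ⟨x, hx, hx0, rfl⟩
  have hsupp (S : Finset (Fin (24 * m))) (hS : #S = ν) :
      Nat.card {x // x ∈ C ∧ ∀ i, x i ≠ 0 → i ∈ S} = 2 ^ (ν - 12 * m) := by
    have hSc : #Sᶜ = 24 * m - ν := by rw [card_compl, Fintype.card_fin, hS]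
    rw [card_supported_eq_pow_of_card_compl_lt (fun y hy => hmin y ((hselfdual y).2 hy))
      (by omega), Nat.card_zmod, hk, hSc]
    congr 1; omega
  have hmoment := sum_card_hammingNorm_mul_numSupersets (C : Set (Fin (24 * m) → ZMod 2)) hsupp
  simp only [SetLike.mem_coe, ← hA, Fintype.card_fin] at hmoment
  have hA0 : A 0 = 1 := (hA 0).trans (card_hammingNorm_eq_zero C.zero_mem)
  have hgap (i : ℕ) (hi : 0 < i) (hi' : i < 4 * m + 4) : A i = 0 :=
    (hA i).trans (card_hammingNorm_eq_of_lt hmin hi hi')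
  rw [sum_range_eq_of_extremal_support (by omega) _ fun w hw hw0 =>
      extremal_weight_cases hdiv hsymm hgap hw (left_ne_zero_of_mul hw0),
    hsymm _ le_rfl, Nat.sub_self, hA0, numSupersets_zero, numSupersets_self hν₂] at hmoment
  have hterm (ℓ : ℕ) (hℓ : ℓ ∈ Icc 1 (4 * m - 1)) :
      (if 4 * m + 4 * ℓ ≤ ν then
          (((20 * m - 4 * ℓ).choose (ν - (4 * m + 4 * ℓ))) : ℚ) else 0) * A (4 * m + 4 * ℓ)
        = ((A (4 * m + 4 * ℓ) * numSupersets (24 * m) ν (4 * m + 4 * ℓ) : ℕ) : ℚ) := by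
    rw [numSupersets, show 24 * m - (4 * m + 4 * ℓ) = 20 * m - 4 * ℓ by omega]
    push_cast [apply_ite (Nat.cast : ℕ → ℚ)]
    ring
  rw [sum_congr rfl hterm]
  have hmomentℚ := congrArg (Nat.cast : ℕ → ℚ) hmoment
  push_cast [apply_ite (Nat.cast : ℕ → ℚ)] at hmomentℚ ⊢
  linear_combination hmomentℚ

/-- **Extremal doubly-even self-dual binary codes.** Let `C` be a `[24m, 12m, 4m+4]`
extremal doubly-even self-dual binary code, with `A_i = 0` for `4 ∤ i` and
`A_i = A_{24m-i}`. Then for each `20m - 4 < ν ≤ 24m`: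
`∑_{ℓ=1}^{4m-1} C(20m-4ℓ, ν-4m-4ℓ) A_{4m+4ℓ} = C(24m,ν)(2^{ν-12m} - 1) - δ(24m,ν)`. -/
theorem extremal_code_relations
    (m : ℕ) (hm : 1 ≤ m)
    (C : Submodule (ZMod 2) (Fin (24 * m) → ZMod 2))
    (hk : Module.finrank (ZMod 2) C = 12 * m)
    (hselfdual : ∀ y : Fin (24 * m) → ZMod 2,
      y ∈ C ↔ ∀ x ∈ C, ∑ i, x i * y i = 0)
    (hd : IsLeast {w : ℕ | ∃ x : Fin (24 * m) → ZMod 2,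
      x ∈ C ∧ x ≠ 0 ∧ hammingNorm x = w} (4 * m + 4))
    (A : ℕ → ℕ)
    (hA : ∀ s, A s = Nat.card {x : Fin (24 * m) → ZMod 2 //
      x ∈ C ∧ hammingNorm x = s})
    (hdiv : ∀ i, ¬ (4 ∣ i) → A i = 0)
    (hsymm : ∀ i ≤ 24 * m, A i = A (24 * m - i)) :
    ∀ ν, 20 * m - 4 < ν → ν ≤ 24 * m →
      ∑ ℓ ∈ Icc 1 (4 * m - 1),
          (if 4 * m + 4 * ℓ ≤ ν then
            (((20 * m - 4 * ℓ).choose (ν - (4 * m + 4 * ℓ))) : ℚ) else 0) * A (4 * m + 4 * ℓ)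
        = ((24 * m).choose ν : ℚ) * ((2 : ℚ) ^ (ν - 12 * m) - 1)
          - (if ν = 24 * m then 1 else 0) :=
  extremal_code_relations_general m C hk hselfdual hd A hA hdiv hsymm
end Restriction
end
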